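/- Two RLFTSs N and N′ are fluid bisimulation equivalent if and only if they are logically equivalent in HML_flb, i.e. N ↔fl N′ iff for every formula Φ of HML_flb, the initial state s₀ of N satisfies Φ (in N) exactly when the initial state s₀′ of N′ satisfies Φ (in N′). -/
import Mathlib


open scoped BigOperators

/-- A rated labeled fluid transition system (RLFTS) over a type `Act` of actions. -/
structure RLFTS (Act : Type) where
  S : Type
  E : Type
  s0 : S
  src : E → S
  tgt : E → S
  rate : E → ℝ
  label : E → Act
  RP : S → ℝ
  rate_pos : ∀ e, 0 < rate e
  out_finite : ∀ s : S, {e : E | src e = s}.Finite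
  out_nonempty : ∀ s : S, ∃ e : E, src e = s

namespace RLFTS

variable {Act : Type}

/-- Exit rate of a state. -/
noncomputable def RE (N : RLFTS Act) (s : N.S) : ℝ :=
  ∑ᶠ e ∈ {e : N.E | N.src e = s}, N.rate e

/-- Average sojourn time in a state. -/
noncomputable def SJ (N : RLFTS Act) (s : N.S) : ℝ := 1 / N.RE s

/-- Firing probability of an edge. -/
noncomputable def PTe (N : RLFTS Act) (e : N.E) : ℝ := N.rate e / N.RE (N.src e)

/-- `IsPathFrom N M es` : the list of edges `es` is a path starting in the state `M`. -/
def IsPathFrom (N : RLFTS Act) : N.S → List N.E → Prop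
  | _, [] => True
  | M, e :: es => N.src e = M ∧ IsPathFrom N (N.tgt e) es

/-- The list of states visited by a path starting in `M`. -/
def visits (N : RLFTS Act) : N.S → List N.E → List N.S
  | M, [] => [M]
  | M, e :: es => M :: visits N (N.tgt e) es

/-- Execution probability of a path. -/
noncomputable def pathPT (N : RLFTS Act) (es : List N.E) : ℝ := (es.map N.PTe).prod

/-- Cumulative execution probability of the `(σ,ς,ϱ)`-selected paths starting in `M`. -/
noncomputable def PTsel (N : RLFTS Act) (M : N.S) (σ : List Act) (ς ϱ : List ℝ) : ℝ :=
  ∑ᶠ es ∈ {es : List N.E | IsPathFrom N M es ∧ es.map N.label = σ ∧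
      (visits N M es).map N.SJ = ς ∧ (visits N M es).map N.RP = ϱ}, N.pathPT es

end RLFTS

namespace RLFTS

variable {Act : Type}

/-- Source map on the disjoint union of the edges of two RLFTSs. -/
def csrc (N N' : RLFTS Act) : N.E ⊕ N'.E → N.S ⊕ N'.S := Sum.map N.src N'.src

/-- Target map on the disjoint union of the edges of two RLFTSs. -/
def ctgt (N N' : RLFTS Act) : N.E ⊕ N'.E → N.S ⊕ N'.S := Sum.map N.tgt N'.tgt

/-- Rate function on the disjoint union of the edges of two RLFTSs. -/
def crate (N N' : RLFTS Act) : N.E ⊕ N'.E → ℝ := Sum.elim N.rate N'.rate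

/-- Labeling on the disjoint union of the edges of two RLFTSs. -/
def clabel (N N' : RLFTS Act) : N.E ⊕ N'.E → Act := Sum.elim N.label N'.label

/-- Fluid-rate function on the disjoint union of the states of two RLFTSs. -/
def cRP (N N' : RLFTS Act) : N.S ⊕ N'.S → ℝ := Sum.elim N.RP N'.RP

/-- Overall rate to move from the state `s` into the set of states `H` by action `a`,
in the disjoint union of two RLFTSs. -/
noncomputable def RMa (N N' : RLFTS Act) (a : Act) (s : N.S ⊕ N'.S)
    (H : Set (N.S ⊕ N'.S)) : ℝ :=
  ∑ᶠ e ∈ {e : N.E ⊕ N'.E | csrc N N' e = s ∧ clabel N N' e = a ∧ ctgt N N' e ∈ H},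
    crate N N' e

/-- `R` is a fluid bisimulation between the RLFTSs `N` and `N'`. -/
def FluidBisim (N N' : RLFTS Act) (R : (N.S ⊕ N'.S) → (N.S ⊕ N'.S) → Prop) : Prop :=
  Equivalence R ∧ R (Sum.inl N.s0) (Sum.inr N'.s0) ∧
    ∀ s1 s2, R s1 s2 → cRP N N' s1 = cRP N N' s2 ∧
      ∀ (a : Act) (s : N.S ⊕ N'.S), RMa N N' a s1 {v | R s v} = RMa N N' a s2 {v | R s v}

/-- The RLFTSs `N` and `N'` are fluid bisimulation equivalent. -/
def FluidBisimEquiv (N N' : RLFTS Act) : Prop := ∃ R, FluidBisim N N' R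

end RLFTS

/-- Formulas of the fluid modal logic `HML_flb`:
`Φ ::= ⊤ | ¬Φ | Φ∧Φ | ∇_a | ≀_r | ⟨a⟩_λ Φ` with `a ∈ Act`, `r ∈ ℝ`, `λ ∈ ℝ_{>0}`. -/
inductive HMLflb (Act : Type) : Type
  | top : HMLflb Act
  | neg : HMLflb Act → HMLflb Act
  | conj : HMLflb Act → HMLflb Act → HMLflb Act
  | nabla : Act → HMLflb Act
  | flrate : ℝ → HMLflb Act
  | dia : Act → {lam : ℝ // 0 < lam} → HMLflb Act → HMLflb Act

/-- Satisfaction relation of `HML_flb` on the states of an RLFTS. -/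
def SatFlb {Act : Type} (N : RLFTS Act) : HMLflb Act → N.S → Prop
  | .top, _ => True
  | .neg Φ, s => ¬ SatFlb N Φ s
  | .conj Φ Ψ, s => SatFlb N Φ s ∧ SatFlb N Ψ s
  | .nabla a, s => ¬ ∃ e : N.E, N.src e = s ∧ N.label e = a
  | .flrate r, s => N.RP s = r
  | .dia a lam Φ, s => ∃ H : Set N.S,
      lam.1 ≤ (∑ᶠ e ∈ {e : N.E | N.src e = s ∧ N.label e = a ∧ N.tgt e ∈ H}, N.rate e) ∧
      ∀ u ∈ H, SatFlb N Φ u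

section FluidAux

open RLFTS

variable {Act : Type}

/-- Combined satisfaction on the disjoint union of the states of two RLFTSs. -/
def CSat (N N' : RLFTS Act) (Φ : HMLflb Act) : N.S ⊕ N'.S → Prop :=
  Sum.elim (SatFlb N Φ) (SatFlb N' Φ)

lemma CSat_top (N N' : RLFTS Act) (v : N.S ⊕ N'.S) : CSat N N' .top v := by
  cases v <;> trivial

lemma CSat_neg (N N' : RLFTS Act) (Φ : HMLflb Act) (v : N.S ⊕ N'.S) :
    CSat N N' (.neg Φ) v ↔ ¬ CSat N N' Φ v := by
  cases v <;> exact Iff.rfl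

lemma CSat_conj (N N' : RLFTS Act) (Φ Ψ : HMLflb Act) (v : N.S ⊕ N'.S) :
    CSat N N' (.conj Φ Ψ) v ↔ CSat N N' Φ v ∧ CSat N N' Ψ v := by
  cases v <;> exact Iff.rfl

lemma CSat_flrate (N N' : RLFTS Act) (r : ℝ) (v : N.S ⊕ N'.S) :
    CSat N N' (.flrate r) v ↔ cRP N N' v = r := by
  cases v <;> exact Iff.rfl

lemma crate_pos (N N' : RLFTS Act) (e : N.E ⊕ N'.E) : 0 < crate N N' e := by
  cases e with
  | inl e => exact N.rate_pos e
  | inr e => exact N'.rate_pos e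

lemma cout_finite (N N' : RLFTS Act) (v : N.S ⊕ N'.S) :
    {e : N.E ⊕ N'.E | csrc N N' e = v}.Finite := by
  cases v with
  | inl s =>
    have h : {e : N.E ⊕ N'.E | csrc N N' e = Sum.inl s}
        = Sum.inl '' {e : N.E | N.src e = s} := by
      ext e; cases e with
      | inl e => simp [csrc]
      | inr e => simp [csrc]
    rw [h]; exact (N.out_finite s).image _
  | inr s =>
    have h : {e : N.E ⊕ N'.E | csrc N N' e = Sum.inr s}
        = Sum.inr '' {e : N'.E | N'.src e = s} := by
      ext e; cases e with
      | inl e => simp [csrc]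
      | inr e => simp [csrc]
    rw [h]; exact (N'.out_finite s).image _

lemma edgeSet_finite (N N' : RLFTS Act) (a : Act) (v : N.S ⊕ N'.S) (H : Set (N.S ⊕ N'.S)) :
    {e : N.E ⊕ N'.E | csrc N N' e = v ∧ clabel N N' e = a ∧ ctgt N N' e ∈ H}.Finite :=
  (cout_finite N N' v).subset fun _ he => he.1

lemma RMa_eq_sum (N N' : RLFTS Act) (a : Act) (v : N.S ⊕ N'.S) (H : Set (N.S ⊕ N'.S)) :
    RMa N N' a v H = ∑ e ∈ (edgeSet_finite N N' a v H).toFinset, crate N N' e :=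
  finsum_mem_eq_finite_toFinset_sum _ _

lemma RMa_nonneg (N N' : RLFTS Act) (a : Act) (v : N.S ⊕ N'.S) (H : Set (N.S ⊕ N'.S)) :
    0 ≤ RMa N N' a v H := by
  rw [RMa_eq_sum]
  exact Finset.sum_nonneg fun e _ => (crate_pos N N' e).le

lemma le_RMa (N N' : RLFTS Act) {a : Act} {v : N.S ⊕ N'.S} {H : Set (N.S ⊕ N'.S)}
    (e : N.E ⊕ N'.E) (h1 : csrc N N' e = v) (h2 : clabel N N' e = a)
    (h3 : ctgt N N' e ∈ H) : crate N N' e ≤ RMa N N' a v H := by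
  rw [RMa_eq_sum]
  refine Finset.single_le_sum (fun e _ => (crate_pos N N' e).le) ?_
  rw [Set.Finite.mem_toFinset]
  exact ⟨h1, h2, h3⟩

lemma RMa_pos_elim (N N' : RLFTS Act) {a : Act} {v : N.S ⊕ N'.S} {H : Set (N.S ⊕ N'.S)}
    (h : 0 < RMa N N' a v H) :
    ∃ e, csrc N N' e = v ∧ clabel N N' e = a ∧ ctgt N N' e ∈ H := by
  by_contra hc
  push_neg at hc
  have hempty : {e : N.E ⊕ N'.E | csrc N N' e = v ∧ clabel N N' e = a ∧ ctgt N N' e ∈ H}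
      = ∅ := by
    ext e
    simp only [Set.mem_setOf_eq, Set.mem_empty_iff_false, iff_false, not_and]
    exact fun h1 h2 => hc e h1 h2
  rw [RMa, hempty, finsum_mem_empty] at h
  exact lt_irrefl 0 h

lemma RMa_congr (N N' : RLFTS Act) {a : Act} {v : N.S ⊕ N'.S} {H H' : Set (N.S ⊕ N'.S)}
    (h : ∀ e, csrc N N' e = v → clabel N N' e = a → (ctgt N N' e ∈ H ↔ ctgt N N' e ∈ H')) :
    RMa N N' a v H = RMa N N' a v H' := by
  have hset : {e : N.E ⊕ N'.E | csrc N N' e = v ∧ clabel N N' e = a ∧ ctgt N N' e ∈ H}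
      = {e : N.E ⊕ N'.E | csrc N N' e = v ∧ clabel N N' e = a ∧ ctgt N N' e ∈ H'} := by
    ext e
    exact and_congr_right fun h1 => and_congr_right fun h2 => h e h1 h2
  rw [RMa, RMa, hset]

lemma RMa_empty (N N' : RLFTS Act) (a : Act) (v : N.S ⊕ N'.S) :
    RMa N N' a v (∅ : Set (N.S ⊕ N'.S)) = 0 := by
  have hempty : {e : N.E ⊕ N'.E | csrc N N' e = v ∧ clabel N N' e = a
      ∧ ctgt N N' e ∈ (∅ : Set (N.S ⊕ N'.S))} = ∅ := by
    ext e; simp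
  rw [RMa, hempty, finsum_mem_empty]

lemma RMa_mono (N N' : RLFTS Act) {a : Act} {v : N.S ⊕ N'.S} {H H' : Set (N.S ⊕ N'.S)}
    (h : H ⊆ H') : RMa N N' a v H ≤ RMa N N' a v H' := by
  rw [RMa_eq_sum, RMa_eq_sum]
  refine Finset.sum_le_sum_of_subset_of_nonneg ?_ fun e _ _ => (crate_pos N N' e).le
  intro e he
  rw [Set.Finite.mem_toFinset] at he ⊢
  exact ⟨he.1, he.2.1, h he.2.2⟩

lemma RMa_union (N N' : RLFTS Act) {a : Act} {v : N.S ⊕ N'.S} {H H' : Set (N.S ⊕ N'.S)}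
    (hd : Disjoint H H') :
    RMa N N' a v (H ∪ H') = RMa N N' a v H + RMa N N' a v H' := by
  have hset : {e : N.E ⊕ N'.E | csrc N N' e = v ∧ clabel N N' e = a ∧ ctgt N N' e ∈ H ∪ H'}
      = {e : N.E ⊕ N'.E | csrc N N' e = v ∧ clabel N N' e = a ∧ ctgt N N' e ∈ H}
        ∪ {e : N.E ⊕ N'.E | csrc N N' e = v ∧ clabel N N' e = a ∧ ctgt N N' e ∈ H'} := by
    ext e
    simp only [Set.mem_setOf_eq, Set.mem_union]
    tauto
  have hdisj : Disjoint
      {e : N.E ⊕ N'.E | csrc N N' e = v ∧ clabel N N' e = a ∧ ctgt N N' e ∈ H}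
      {e : N.E ⊕ N'.E | csrc N N' e = v ∧ clabel N N' e = a ∧ ctgt N N' e ∈ H'} := by
    rw [Set.disjoint_left]
    intro e he1 he2
    exact Set.disjoint_left.mp hd he1.2.2 he2.2.2
  rw [RMa, hset, finsum_mem_union hdisj (edgeSet_finite N N' a v H) (edgeSet_finite N N' a v H')]
  rfl

lemma RMa_inl (N N' : RLFTS Act) (a : Act) (s : N.S) (H : Set (N.S ⊕ N'.S)) :
    RMa N N' a (Sum.inl s) H =
      ∑ᶠ e ∈ {e : N.E | N.src e = s ∧ N.label e = a ∧ Sum.inl (N.tgt e) ∈ H}, N.rate e := by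
  have hset : {e : N.E ⊕ N'.E | csrc N N' e = Sum.inl s ∧ clabel N N' e = a ∧ ctgt N N' e ∈ H}
      = Sum.inl '' {e : N.E | N.src e = s ∧ N.label e = a ∧ Sum.inl (N.tgt e) ∈ H} := by
    ext e
    cases e with
    | inl e => simp [csrc, clabel, ctgt]
    | inr e => simp [csrc, clabel, ctgt]
  rw [RMa, hset, finsum_mem_image Sum.inl_injective.injOn]
  rfl

lemma RMa_inr (N N' : RLFTS Act) (a : Act) (s : N'.S) (H : Set (N.S ⊕ N'.S)) :
    RMa N N' a (Sum.inr s) H =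
      ∑ᶠ e ∈ {e : N'.E | N'.src e = s ∧ N'.label e = a ∧ Sum.inr (N'.tgt e) ∈ H}, N'.rate e := by
  have hset : {e : N.E ⊕ N'.E | csrc N N' e = Sum.inr s ∧ clabel N N' e = a ∧ ctgt N N' e ∈ H}
      = Sum.inr '' {e : N'.E | N'.src e = s ∧ N'.label e = a ∧ Sum.inr (N'.tgt e) ∈ H} := by
    ext e
    cases e with
    | inl e => simp [csrc, clabel, ctgt]
    | inr e => simp [csrc, clabel, ctgt]
  rw [RMa, hset, finsum_mem_image Sum.inr_injective.injOn]
  rfl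

lemma comp_finite (M : RLFTS Act) (s : M.S) (P : M.E → Prop) :
    {e : M.E | M.src e = s ∧ P e}.Finite :=
  (M.out_finite s).subset fun _ he => he.1

lemma comp_mono (M : RLFTS Act) {s : M.S} {a : Act} {H H' : Set M.S} (h : H ⊆ H') :
    (∑ᶠ e ∈ {e : M.E | M.src e = s ∧ M.label e = a ∧ M.tgt e ∈ H}, M.rate e)
      ≤ ∑ᶠ e ∈ {e : M.E | M.src e = s ∧ M.label e = a ∧ M.tgt e ∈ H'}, M.rate e := by
  rw [finsum_mem_eq_finite_toFinset_sum _ (comp_finite M s _),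
      finsum_mem_eq_finite_toFinset_sum _ (comp_finite M s _)]
  refine Finset.sum_le_sum_of_subset_of_nonneg ?_ fun e _ _ => (M.rate_pos e).le
  intro e he
  rw [Set.Finite.mem_toFinset] at he ⊢
  exact ⟨he.1, he.2.1, h he.2.2⟩

lemma satDia_iff (M : RLFTS Act) (a : Act) (lam : {l : ℝ // 0 < l}) (Φ : HMLflb Act)
    (s : M.S) :
    SatFlb M (.dia a lam Φ) s ↔
      lam.1 ≤ ∑ᶠ e ∈ {e : M.E | M.src e = s ∧ M.label e = a ∧ SatFlb M Φ (M.tgt e)},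
        M.rate e := by
  constructor
  · rintro ⟨H, h1, h2⟩
    refine h1.trans ?_
    have : {e : M.E | M.src e = s ∧ M.label e = a ∧ M.tgt e ∈ H}
        ⊆ {e : M.E | M.src e = s ∧ M.label e = a ∧ M.tgt e ∈ {u | SatFlb M Φ u}} :=
      fun e he => ⟨he.1, he.2.1, h2 _ he.2.2⟩
    exact comp_mono M (fun u hu => h2 u hu)
  · intro h
    exact ⟨{u | SatFlb M Φ u}, h, fun u hu => hu⟩

lemma CSat_dia (N N' : RLFTS Act) (a : Act) (lam : {l : ℝ // 0 < l}) (Φ : HMLflb Act)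
    (v : N.S ⊕ N'.S) :
    CSat N N' (.dia a lam Φ) v ↔ lam.1 ≤ RMa N N' a v {w | CSat N N' Φ w} := by
  cases v with
  | inl s =>
    rw [show CSat N N' (.dia a lam Φ) (Sum.inl s) ↔ SatFlb N (.dia a lam Φ) s from Iff.rfl,
      satDia_iff, RMa_inl]
    exact Iff.rfl
  | inr s =>
    rw [show CSat N N' (.dia a lam Φ) (Sum.inr s) ↔ SatFlb N' (.dia a lam Φ) s from Iff.rfl,
      satDia_iff, RMa_inr]
    exact Iff.rfl

lemma CSat_nabla (N N' : RLFTS Act) (a : Act) (v : N.S ⊕ N'.S) :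
    CSat N N' (.nabla a) v ↔ ¬ ∃ e, csrc N N' e = v ∧ clabel N N' e = a := by
  cases v with
  | inl s =>
    rw [show CSat N N' (.nabla a) (Sum.inl s)
        ↔ ¬ ∃ e : N.E, N.src e = s ∧ N.label e = a from Iff.rfl]
    apply not_congr
    constructor
    · rintro ⟨e, h1, h2⟩
      exact ⟨Sum.inl e, by simp [csrc, h1], by simp [clabel, h2]⟩
    · rintro ⟨e, h1, h2⟩
      cases e with
      | inl e =>
        refine ⟨e, ?_, ?_⟩
        · simpa [csrc] using h1
        · simpa [clabel] using h2
      | inr e => simp [csrc] at h1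
  | inr s =>
    rw [show CSat N N' (.nabla a) (Sum.inr s)
        ↔ ¬ ∃ e : N'.E, N'.src e = s ∧ N'.label e = a from Iff.rfl]
    apply not_congr
    constructor
    · rintro ⟨e, h1, h2⟩
      exact ⟨Sum.inr e, by simp [csrc, h1], by simp [clabel, h2]⟩
    · rintro ⟨e, h1, h2⟩
      cases e with
      | inl e => simp [csrc] at h1
      | inr e =>
        refine ⟨e, ?_, ?_⟩
        · simpa [csrc] using h1
        · simpa [clabel] using h2

/-- Logical equivalence of two states of the disjoint union. -/
def LogEq (N N' : RLFTS Act) (v w : N.S ⊕ N'.S) : Prop :=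
  ∀ Φ, CSat N N' Φ v ↔ CSat N N' Φ w

lemma logEq_equivalence (N N' : RLFTS Act) : Equivalence (LogEq N N') :=
  ⟨fun _ _ => Iff.rfl, fun h Φ => (h Φ).symm, fun h1 h2 Φ => (h1 Φ).trans (h2 Φ)⟩

lemma exists_distinguishing (N N' : RLFTS Act) {v w : N.S ⊕ N'.S} (h : ¬ LogEq N N' v w) :
    ∃ Φ, CSat N N' Φ v ∧ ¬ CSat N N' Φ w := by
  classical
  rw [LogEq, not_forall] at h
  obtain ⟨Φ, hΦ⟩ := h
  by_cases hv : CSat N N' Φ v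
  · exact ⟨Φ, hv, fun hw => hΦ ⟨fun _ => hw, fun _ => hv⟩⟩
  · refine ⟨.neg Φ, (CSat_neg N N' Φ v).mpr hv, ?_⟩
    rw [CSat_neg]
    intro hw
    exact hΦ (iff_of_false hv hw)

lemma distinguish (N N' : RLFTS Act) (t0 : N.S ⊕ N'.S) (T : Finset (N.S ⊕ N'.S)) :
    ∃ Ψ, CSat N N' Ψ t0 ∧ ∀ u ∈ T, ¬ LogEq N N' t0 u → ¬ CSat N N' Ψ u := by
  classical
  induction T using Finset.induction_on with
  | empty => exact ⟨.top, CSat_top N N' t0, fun u hu => absurd hu (Finset.notMem_empty u)⟩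
  | @insert u T hu ih =>
    obtain ⟨Ψ, hΨ0, hΨ⟩ := ih
    by_cases hl : LogEq N N' t0 u
    · refine ⟨Ψ, hΨ0, fun u' hu' hne => ?_⟩
      rcases Finset.mem_insert.mp hu' with rfl | hmem
      · exact absurd hl hne
      · exact hΨ u' hmem hne
    · obtain ⟨Φu, h1, h2⟩ := exists_distinguishing N N' hl
      refine ⟨.conj Ψ Φu, (CSat_conj N N' Ψ Φu t0).mpr ⟨hΨ0, h1⟩, fun u' hu' hne => ?_⟩
      rcases Finset.mem_insert.mp hu' with rfl | hmem
      · exact fun hc => h2 ((CSat_conj N N' Ψ Φu u').mp hc).2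
      · exact fun hc => hΨ u' hmem hne ((CSat_conj N N' Ψ Φu u').mp hc).1

lemma RMa_classUnion (N N' : RLFTS Act) {R : (N.S ⊕ N'.S) → (N.S ⊕ N'.S) → Prop}
    (hR : Equivalence R)
    (hcl : ∀ s1 s2, R s1 s2 → ∀ (a : Act) (t : N.S ⊕ N'.S),
      RMa N N' a s1 {v | R t v} = RMa N N' a s2 {v | R t v})
    {s1 s2 : N.S ⊕ N'.S} (h12 : R s1 s2) (a : Act) (T : Finset (N.S ⊕ N'.S)) :
    RMa N N' a s1 (⋃ t ∈ T, {v | R t v}) = RMa N N' a s2 (⋃ t ∈ T, {v | R t v}) := by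
  classical
  induction T using Finset.induction_on with
  | empty =>
    have he : (⋃ t ∈ (∅ : Finset (N.S ⊕ N'.S)), {v | R t v}) = (∅ : Set (N.S ⊕ N'.S)) := by
      simp
    rw [he, RMa_empty, RMa_empty]
  | @insert t0 T ht0 ih =>
    have hins : (⋃ t ∈ insert t0 T, {v | R t v})
        = {v | R t0 v} ∪ ⋃ t ∈ T, {v | R t v} := by
      simp [Set.iUnion_iUnion_eq_or_left]
    rw [hins]
    by_cases hex : ∃ t' ∈ T, R t0 t'
    · obtain ⟨t', ht', hR0⟩ := hex
      have hsub : {v | R t0 v} ⊆ ⋃ t ∈ T, {v | R t v} := by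
        intro v hv
        have : R t' v := hR.trans (hR.symm hR0) hv
        exact Set.mem_iUnion₂.mpr ⟨t', ht', this⟩
      rw [Set.union_eq_self_of_subset_left hsub]
      exact ih
    · push_neg at hex
      have hdisj : Disjoint {v | R t0 v} (⋃ t ∈ T, {v | R t v}) := by
        rw [Set.disjoint_left]
        intro v hv0 hvU
        obtain ⟨t, ht, hvt⟩ := Set.mem_iUnion₂.mp hvU
        exact hex t ht (hR.trans hv0 (hR.symm hvt))
      rw [RMa_union N N' hdisj, RMa_union N N' hdisj, hcl s1 s2 h12 a t0, ih]

lemma RMa_closed_eq (N N' : RLFTS Act) {R : (N.S ⊕ N'.S) → (N.S ⊕ N'.S) → Prop}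
    (hR : Equivalence R)
    (hcl : ∀ s1 s2, R s1 s2 → ∀ (a : Act) (t : N.S ⊕ N'.S),
      RMa N N' a s1 {v | R t v} = RMa N N' a s2 {v | R t v})
    {s1 s2 : N.S ⊕ N'.S} (h12 : R s1 s2) (a : Act)
    {H : Set (N.S ⊕ N'.S)} (hH : ∀ v w, v ∈ H → R v w → w ∈ H) :
    RMa N N' a s1 H = RMa N N' a s2 H := by
  classical
  set ES : Set (N.E ⊕ N'.E) :=
    {e | (csrc N N' e = s1 ∨ csrc N N' e = s2) ∧ clabel N N' e = a ∧ ctgt N N' e ∈ H} with hES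
  have hESfin : ES.Finite := by
    refine ((cout_finite N N' s1).union (cout_finite N N' s2)).subset ?_
    intro e he
    rcases he.1 with h | h
    · exact Or.inl h
    · exact Or.inr h
  have hTfin : (ctgt N N' '' ES).Finite := hESfin.image _
  set T : Finset (N.S ⊕ N'.S) := hTfin.toFinset with hT
  have hTmem : ∀ t ∈ T, t ∈ H := by
    intro t ht
    rw [hT, Set.Finite.mem_toFinset] at ht
    obtain ⟨e, heES, rfl⟩ := ht
    exact heES.2.2
  have hcongr : ∀ s0, (s0 = s1 ∨ s0 = s2) →
      RMa N N' a s0 H = RMa N N' a s0 (⋃ t ∈ T, {v | R t v}) := by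
    intro s0 hs0
    apply RMa_congr
    intro e h1 h2
    constructor
    · intro hmem
      have heES : e ∈ ES := by
        refine ⟨?_, h2, hmem⟩
        rcases hs0 with rfl | rfl
        · exact Or.inl h1
        · exact Or.inr h1
      have htT : ctgt N N' e ∈ T := by
        rw [hT, Set.Finite.mem_toFinset]
        exact ⟨e, heES, rfl⟩
      exact Set.mem_iUnion₂.mpr ⟨ctgt N N' e, htT, hR.refl _⟩
    · intro hmem
      obtain ⟨t, ht, hvt⟩ := Set.mem_iUnion₂.mp hmem
      exact hH t (ctgt N N' e) (hTmem t ht) hvt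
  rw [hcongr s1 (Or.inl rfl), hcongr s2 (Or.inr rfl)]
  exact RMa_classUnion N N' hR hcl h12 a T

lemma bisim_implies_logEq (N N' : RLFTS Act) {R : (N.S ⊕ N'.S) → (N.S ⊕ N'.S) → Prop}
    (hB : FluidBisim N N' R) :
    ∀ (Φ : HMLflb Act) (v w : N.S ⊕ N'.S), R v w → (CSat N N' Φ v ↔ CSat N N' Φ w) := by
  obtain ⟨hEq, _, hcond⟩ := hB
  have hRP : ∀ v w, R v w → cRP N N' v = cRP N N' w := fun v w h => (hcond v w h).1
  have hRM : ∀ s1 s2, R s1 s2 → ∀ (a : Act) (t : N.S ⊕ N'.S),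
      RMa N N' a s1 {v | R t v} = RMa N N' a s2 {v | R t v} :=
    fun s1 s2 h a t => (hcond s1 s2 h).2 a t
  intro Φ
  induction Φ with
  | top => exact fun v w _ => iff_of_true (CSat_top N N' v) (CSat_top N N' w)
  | neg Φ ih =>
    intro v w h
    rw [CSat_neg, CSat_neg]
    exact not_congr (ih v w h)
  | conj Φ Ψ ih1 ih2 =>
    intro v w h
    rw [CSat_conj, CSat_conj]
    exact and_congr (ih1 v w h) (ih2 v w h)
  | nabla a =>
    have key : ∀ v w, R v w → (∃ e, csrc N N' e = w ∧ clabel N N' e = a) →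
        (∃ e, csrc N N' e = v ∧ clabel N N' e = a) := by
      rintro v w h ⟨e, h1, h2⟩
      have hpos : 0 < RMa N N' a w {x | R (ctgt N N' e) x} :=
        lt_of_lt_of_le (crate_pos N N' e) (le_RMa N N' e h1 h2 (hEq.refl _))
      rw [← hRM v w h a (ctgt N N' e)] at hpos
      obtain ⟨e', h1', h2', _⟩ := RMa_pos_elim N N' hpos
      exact ⟨e', h1', h2'⟩
    intro v w h
    rw [CSat_nabla, CSat_nabla]
    exact not_congr ⟨key w v (hEq.symm h), key v w h⟩
  | flrate r =>
    intro v w h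
    rw [CSat_flrate, CSat_flrate, hRP v w h]
  | dia a lam Φ ih =>
    intro v w h
    rw [CSat_dia, CSat_dia]
    have hcl : ∀ x y, x ∈ {u | CSat N N' Φ u} → R x y → y ∈ {u | CSat N N' Φ u} :=
      fun x y hx hxy => (ih x y hxy).mp hx
    rw [RMa_closed_eq N N' hEq hRM h a hcl]

lemma logEq_bisim (N N' : RLFTS Act)
    (h0 : ∀ Φ : HMLflb Act, SatFlb N Φ N.s0 ↔ SatFlb N' Φ N'.s0) :
    FluidBisim N N' (LogEq N N') := by
  classical
  refine ⟨logEq_equivalence N N', fun Φ => h0 Φ, ?_⟩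
  intro s1 s2 h12
  constructor
  · have := (h12 (.flrate (cRP N N' s1))).mp ((CSat_flrate N N' _ s1).mpr rfl)
    exact ((CSat_flrate N N' _ s2).mp this).symm
  · intro a t
    set ES : Set (N.E ⊕ N'.E) :=
      {e | (csrc N N' e = s1 ∨ csrc N N' e = s2) ∧ clabel N N' e = a} with hES
    have hESfin : ES.Finite := by
      refine ((cout_finite N N' s1).union (cout_finite N N' s2)).subset ?_
      intro e he
      rcases he.1 with h | h
      · exact Or.inl h
      · exact Or.inr h
    have hTfin : (ctgt N N' '' ES).Finite := hESfin.image _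
    set T : Finset (N.S ⊕ N'.S) := hTfin.toFinset with hT
    by_cases hex : ∃ t0 ∈ T, LogEq N N' t t0
    · obtain ⟨t0, ht0T, hLt0⟩ := hex
      obtain ⟨Ψ, hΨ0, hΨ⟩ := distinguish N N' t0 T
      have hCeq : ∀ s0, (s0 = s1 ∨ s0 = s2) →
          RMa N N' a s0 {v | LogEq N N' t v} = RMa N N' a s0 {w | CSat N N' Ψ w} := by
        intro s0 hs0
        apply RMa_congr
        intro e h1 h2
        have htT : ctgt N N' e ∈ T := by
          rw [hT, Set.Finite.mem_toFinset]
          refine ⟨e, ⟨?_, h2⟩, rfl⟩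
          rcases hs0 with rfl | rfl
          · exact Or.inl h1
          · exact Or.inr h1
        constructor
        · intro hmem
          have hL : LogEq N N' t0 (ctgt N N' e) :=
            (logEq_equivalence N N').trans ((logEq_equivalence N N').symm hLt0) hmem
          exact (hL Ψ).mp hΨ0
        · intro hmem
          by_contra hnot
          have hne : ¬ LogEq N N' t0 (ctgt N N' e) := by
            intro hc
            exact hnot ((logEq_equivalence N N').trans hLt0 hc)
          exact hΨ (ctgt N N' e) htT hne hmem
      rw [hCeq s1 (Or.inl rfl), hCeq s2 (Or.inr rfl)]
      have haux : ∀ u1 u2 : N.S ⊕ N'.S, LogEq N N' u1 u2 →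
          RMa N N' a u1 {w | CSat N N' Ψ w} ≤ RMa N N' a u2 {w | CSat N N' Ψ w} := by
        intro u1 u2 hL
        by_contra hlt
        push_neg at hlt
        have hpos : 0 < RMa N N' a u1 {w | CSat N N' Ψ w} :=
          lt_of_le_of_lt (RMa_nonneg N N' a u2 _) hlt
        have hd1 : CSat N N' (.dia a ⟨_, hpos⟩ Ψ) u1 :=
          (CSat_dia N N' a ⟨_, hpos⟩ Ψ u1).mpr le_rfl
        have hd2 := (hL _).mp hd1
        have := (CSat_dia N N' a ⟨_, hpos⟩ Ψ u2).mp hd2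
        exact absurd this (not_le.mpr hlt)
      exact le_antisymm (haux s1 s2 h12) (haux s2 s1 fun Φ => (h12 Φ).symm)
    · push_neg at hex
      have hzero : ∀ s0, (s0 = s1 ∨ s0 = s2) →
          RMa N N' a s0 {v | LogEq N N' t v} = 0 := by
        intro s0 hs0
        have hc0 : RMa N N' a s0 {v | LogEq N N' t v}
            = RMa N N' a s0 (∅ : Set (N.S ⊕ N'.S)) := by
          apply RMa_congr
          intro e h1 h2
          constructor
          · intro hmem
            have htT : ctgt N N' e ∈ T := by
              rw [hT, Set.Finite.mem_toFinset]
              refine ⟨e, ⟨?_, h2⟩, rfl⟩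
              rcases hs0 with rfl | rfl
              · exact Or.inl h1
              · exact Or.inr h1
            exact absurd hmem (hex (ctgt N N' e) htT)
          · exact fun hmem => absurd hmem (Set.notMem_empty _)
        rw [hc0, RMa_empty]
      rw [hzero s1 (Or.inl rfl), hzero s2 (Or.inr rfl)]

end FluidAux

/-- Logical characterization of fluid bisimulation equivalence: `N ↔fl N'` iff `N` and `N'`
satisfy the same formulas of `HML_flb` at their initial states. -/
theorem RLFTS.fluidBisimEquiv_iff_HMLflb {Act : Type} (N N' : RLFTS Act) :
    RLFTS.FluidBisimEquiv N N' ↔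
      ∀ Φ : HMLflb Act, (SatFlb N Φ N.s0 ↔ SatFlb N' Φ N'.s0) := by
  constructor
  · rintro ⟨R, hB⟩ Φ
    exact bisim_implies_logEq N N' hB Φ (Sum.inl N.s0) (Sum.inr N'.s0) hB.2.1
  · intro h
    exact ⟨LogEq N N', logEq_bisim N N' h⟩
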